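/- arXiv:2511.00015 — 3 statements merged into one kernel-verified Lean document; each statement's English description precedes it below -/
import Mathlib

section
/- In a single strip swap applied to a permutation π, the number of strips can decrease by at most 4; that is, if π' is obtained from π by one strip swap, then #strips(π') ≥ #strips(π) − 4. -/
/-- A run: each element is the successor of the previous one. -/
def IsRun (l : List ℕ) : Prop := l.Chain' (fun a b => b = a + 1)

/-- `noLink x y`: the optional value `y` does not continue the optional value `x` by +1. -/
def noLink (x y : Option ℕ) : Prop := ∀ a ∈ x, ∀ b ∈ y, b ≠ a + 1

/-- Number of "breaks" between consecutive entries (places where the successor chain stops). -/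
def breaks (l : List ℕ) : ℕ := (l.zip l.tail).countP (fun p => decide (p.2 ≠ p.1 + 1))

/-- Number of strips (maximal runs of consecutive increasing values). -/
def numStrips (l : List ℕ) : ℕ := if l = [] then 0 else 1 + breaks l

/-- Number of reversals (descents): adjacent pairs with the left entry larger. -/
def revCount (l : List ℕ) : ℕ := (l.zip l.tail).countP (fun p => decide (p.2 < p.1))

/-- `π'` is obtained from `π` by swapping two (disjoint) strips of `π`. -/
def StripSwap (π π' : List ℕ) : Prop :=
  ∃ A X B Y C : List ℕ,
    π = A ++ X ++ B ++ Y ++ C ∧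
    π' = A ++ Y ++ B ++ X ++ C ∧
    X ≠ [] ∧ Y ≠ [] ∧ IsRun X ∧ IsRun Y ∧
    noLink A.getLast? X.head? ∧ noLink X.getLast? (B ++ Y ++ C).head? ∧
    noLink (A ++ X ++ B).getLast? Y.head? ∧ noLink Y.getLast? C.head?

/-- `π'` is obtained from `π` by removing one strip and reinserting it at another position. -/
def BlockMove (π π' : List ℕ) : Prop :=
  ∃ A X B A' B' : List ℕ,
    π = A ++ X ++ B ∧
    X ≠ [] ∧ IsRun X ∧
    noLink A.getLast? X.head? ∧ noLink X.getLast? B.head? ∧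
    A' ++ B' = A ++ B ∧ A' ≠ A ∧
    π' = A' ++ X ++ B'

/-- `StepsTo R k a b`: `b` is reachable from `a` in exactly `k` steps of the relation `R`. -/
def StepsTo (R : List ℕ → List ℕ → Prop) : ℕ → List ℕ → List ℕ → Prop
  | 0 => fun a b => a = b
  | k + 1 => fun a b => ∃ c, R a c ∧ StepsTo R k c b

/-- The identity permutation of `{1,…,n}` in one-line notation. -/
def idPerm (n : ℕ) : List ℕ := List.range' 1 n

/-- Strip swap distance to the identity permutation of `{1,…,n}`. -/
noncomputable def SSD (n : ℕ) (π : List ℕ) : ℕ :=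
  sInf {m | StepsTo StripSwap m π (idPerm n)}

/-- Block sorting distance to the identity permutation of `{1,…,n}`. -/
noncomputable def BS (n : ℕ) (π : List ℕ) : ℕ :=
  sInf {m | StepsTo BlockMove m π (idPerm n)}

lemma breaks_cons_cons (a b : ℕ) (l : List ℕ) :
    breaks (a :: b :: l) = (if b = a + 1 then 0 else 1) + breaks (b :: l) := by
  simp only [breaks, List.tail_cons, List.zip_cons_cons, List.countP_cons]
  split <;> simp_all <;> omega

lemma breaks_append_ge (l1 l2 : List ℕ) : breaks l1 + breaks l2 ≤ breaks (l1 ++ l2) := by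
  induction l1 with
  | nil => simp [breaks]
  | cons a t ih =>
    cases t with
    | nil =>
      cases l2 with
      | nil => simp [breaks]
      | cons b s =>
        have : breaks [a] = 0 := by simp [breaks]
        rw [this]
        have := breaks_cons_cons a b s
        simp only [List.singleton_append, this]
        omega
    | cons b t' =>
      have h1 := breaks_cons_cons a b t'
      have h2 := breaks_cons_cons a b (t' ++ l2)
      simp only [List.cons_append] at *
      rw [h1, h2]
      omega

lemma breaks_append_le (l1 l2 : List ℕ) : breaks (l1 ++ l2) ≤ breaks l1 + breaks l2 + 1 := by
  induction l1 with
  | nil => simp [breaks]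
  | cons a t ih =>
    cases t with
    | nil =>
      cases l2 with
      | nil => simp [breaks]
      | cons b s =>
        have h0 : breaks [a] = 0 := by simp [breaks]
        have := breaks_cons_cons a b s
        simp only [List.singleton_append, this, h0]
        split <;> omega
    | cons b t' =>
      have h1 := breaks_cons_cons a b t'
      have h2 := breaks_cons_cons a b (t' ++ l2)
      simp only [List.cons_append] at *
      rw [h1, h2]
      omega

/-- a single strip swap decreases the number of strips by at most 4. -/
theorem stripSwap_numStrips_lower (n : ℕ) (π π' : List ℕ)
    (hperm : π.Perm (idPerm n)) (h : StripSwap π π') :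
    numStrips π' ≥ numStrips π - 4 := by
  obtain ⟨A, X, B, Y, C, hπ, hπ', hX, hY, -, -, -, -, -, -⟩ := h
  have hπne : π ≠ [] := by
    subst hπ; simp [List.append_eq_nil_iff]; intro _ hx; exact absurd hx hX
  have hπ'ne : π' ≠ [] := by
    subst hπ'; simp [List.append_eq_nil_iff]; intro _ _ _ hx; exact absurd hx hX
  have hle : breaks π ≤ breaks A + breaks X + breaks B + breaks Y + breaks C + 4 := by
    subst hπ
    have h1 := breaks_append_le A (X ++ B ++ Y ++ C)
    have h2 := breaks_append_le X (B ++ Y ++ C)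
    have h3 := breaks_append_le B (Y ++ C)
    have h4 := breaks_append_le Y C
    simp only [List.append_assoc] at *
    omega
  have hge : breaks A + breaks Y + breaks B + breaks X + breaks C ≤ breaks π' := by
    subst hπ'
    have h1 := breaks_append_ge A (Y ++ B ++ X ++ C)
    have h2 := breaks_append_ge Y (B ++ X ++ C)
    have h3 := breaks_append_ge B (X ++ C)
    have h4 := breaks_append_ge X C
    simp only [List.append_assoc] at *
    omega
  simp only [numStrips, if_neg hπne, if_neg hπ'ne, ge_iff_le]
  omega
end

section
/- A single strip swap reduces the number of reversals of a permutation by at most 2; that is, if π' is obtained from π by one strip swap, then rev(π') ≥ rev(π) − 2. -/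
/-!
Write `π = A X B Y C` and `π' = A Y B X C`. The reversals inside the blocks are the same in
both, so only the junctions between consecutive blocks matter. If `B` is nonempty, the four
junctions of `π` pair up into two exchanges of the form `(a | x), (b | y) ↦ (a | y), (b | x)`,
and such an exchange destroys at most one descent: destroying both would force
`x < a ≤ y < b ≤ x`. If `B` is empty, the three junctions of `π` can only all be destroyed if
`x₁ < a ≤ y₁ ≤ yₗ ≤ x₁`, which is impossible since the strip `Y` increases.
-/

/-- `descent l.getLast? m.head?` counts the reversal at the junction of `l ++ m`; `none` stands for
an empty block. -/
def descent : Option ℕ → Option ℕ → ℕ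
  | some u, some v => if v < u then 1 else 0
  | _, _ => 0

lemma revCount_cons (a : ℕ) (l : List ℕ) :
    revCount (a :: l) = descent (some a) l.head? + revCount l := by
  cases l with
  | nil => rfl
  | cons b l => simp [revCount, descent, List.countP_cons, add_comm]

lemma revCount_append (l m : List ℕ) :
    revCount (l ++ m) = revCount l + revCount m + descent l.getLast? m.head? := by
  induction l with
  | nil => simp [revCount, descent]
  | cons a l ih =>
    by_cases hl : l = []
    · subst hl
      rw [List.singleton_append, revCount_cons, List.getLast?_singleton]
      change _ = 0 + _ + _
      omega
    · rw [List.cons_append, revCount_cons, ih, revCount_cons, List.head?_append_of_ne_nil _ hl,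
        List.getLast?_cons_of_ne_nil hl]
      omega

lemma List.IsChain.head_le_getLast {α : Type*} [Preorder α] {l : List α}
    (h : l.IsChain (· ≤ ·)) : ∀ u ∈ l.head?, ∀ v ∈ l.getLast?, u ≤ v := by
  intro u hu v hv
  have hl : l ≠ [] := by rintro rfl; simp at hu
  rw [List.head?_eq_some_head hl, Option.mem_some_iff] at hu
  rw [List.getLast?_eq_some_getLast hl, Option.mem_some_iff] at hv
  subst hu hv
  have := List.relationReflTransGen_of_exists_isChain l h hl
  rwa [Relation.reflTransGen_eq_self] at this

lemma descent_add_descent_le (a x b y : Option ℕ) :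
    descent a x + descent b y ≤ descent a y + descent b x + 1 := by
  cases a <;> cases x <;> cases b <;> cases y <;> grind [descent]

lemma descent_add_descent_add_descent_le (a x x' y y' c : Option ℕ)
    (hy : ∀ u ∈ y, ∀ v ∈ y', u ≤ v) :
    descent a x + descent x' y + descent y' c ≤ descent a y + descent y' x + descent x' c + 2 := by
  cases a <;> cases x <;> cases x' <;> cases y <;> cases y' <;> cases c <;> grind [descent]

theorem stripSwap_revCount_lower_general (π π' : List ℕ) (h : StripSwap π π') :
    revCount π' ≥ revCount π - 2 := by
  obtain ⟨A, X, B, Y, C, rfl, rfl, hX, hY, -, hrY, -⟩ := h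
  by_cases hB : B = []
  · subst hB
    have hjunctions := descent_add_descent_add_descent_le A.getLast? X.head? X.getLast? Y.head? Y.getLast?
      C.head? (hrY.imp fun _ _ hab => by omega).head_le_getLast
    simp only [List.append_nil, revCount_append, List.getLast?_append_of_ne_nil _ hX,
      List.getLast?_append_of_ne_nil _ hY]
    omega
  · have hfront := descent_add_descent_le A.getLast? X.head? B.getLast? Y.head?
    have hback := descent_add_descent_le X.getLast? B.head? Y.getLast? C.head?
    simp only [revCount_append, List.getLast?_append_of_ne_nil _ hX,
      List.getLast?_append_of_ne_nil _ hY, List.getLast?_append_of_ne_nil _ hB]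
    omega

/-- a single strip swap decreases the number of reversals by at most 2. -/
theorem stripSwap_revCount_lower (n : ℕ) (π π' : List ℕ)
    (hperm : π.Perm (idPerm n)) (h : StripSwap π π') :
    revCount π' ≥ revCount π - 2 :=
  stripSwap_revCount_lower_general π π' h
end

section
/- For every permutation π of {1,…,n}, the block sorting distance satisfies bs(π) ≥ rev(π). -/
/-!
Removing a strip `X` from `A ++ X ++ B` changes the descents only at the seams: the two seams
`A|X`, `X|B` are replaced by `A|B`. Since `X` is an interval of values containing neither the
last entry of `A` nor the first of `B`, the old seams carry at most one descent more than the new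
one; reinserting an increasing `X` elsewhere never removes a descent. So each block move lowers
`rev` by at most one. For the infimum defining `BS` not to be the junk value `sInf ∅ = 0`, every
permutation must be sortable: move the strip starting with `k + 1` right behind the sorted
prefix `1, …, k`.
-/

open List Relation

def junctionRev (L M : List ℕ) : ℕ :=
  match L.getLast?, M.head? with
  | some a, some b => if b < a then 1 else 0
  | _, _ => 0

theorem revCount_cons_cons (a b : ℕ) (t : List ℕ) :
    revCount (a :: b :: t) = (if b < a then 1 else 0) + revCount (b :: t) := by
  simp only [revCount, tail_cons, zip_cons_cons, countP_cons, decide_eq_true_eq]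
  omega

theorem revCount_append_s8 (L M : List ℕ) :
    revCount (L ++ M) = revCount L + junctionRev L M + revCount M := by
  induction L with
  | nil => simp [revCount, junctionRev]
  | cons a L ih =>
    cases L with
    | nil =>
      cases M with
      | nil => rfl
      | cons b t =>
        rw [singleton_append, revCount_cons_cons]
        simp [junctionRev, revCount]
    | cons b t =>
      have : junctionRev (a :: b :: t) M = junctionRev (b :: t) M := by
        simp only [junctionRev, getLast?_cons_cons]
      simp only [cons_append, revCount_cons_cons, this] at ih ⊢
      omega

theorem revCount_range' (s n : ℕ) : revCount (range' s n) = 0 := by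
  induction n generalizing s with
  | zero => rfl
  | succ n ih =>
    cases n with
    | zero => rfl
    | succ n =>
      rw [range'_succ, range'_succ, revCount_cons_cons, ← range'_succ, ih]
      simp

theorem revCount_append_range'_append (A B : List ℕ) {h L : ℕ} (hL : 0 < L) :
    revCount (A ++ range' h L ++ B) =
      revCount A + revCount B + (junctionRev A (range' h L) + junctionRev (range' h L) B) := by
  have hseam : junctionRev A (range' h L ++ B) = junctionRev A (range' h L) := by
    simp only [junctionRev, head?_append, head?_range', if_neg hL.ne', Option.some_or]
  rw [append_assoc, revCount_append_s8, revCount_append_s8, revCount_range', hseam]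
  omega

theorem junctionRev_le_add_range' (A B : List ℕ) {h L : ℕ} (hL : 0 < L) :
    junctionRev A B ≤ junctionRev A (range' h L) + junctionRev (range' h L) B := by
  simp only [junctionRev, getLast?_range', head?_range', hL.ne', if_false]
  cases A.getLast? <;> cases B.head? <;> dsimp only <;> (try split_ifs) <;> omega

theorem junctionRev_range'_add_le {A B : List ℕ} {h L : ℕ} (hL : 0 < L)
    (hAB : (A ++ B).Disjoint (range' h L)) :
    junctionRev A (range' h L) + junctionRev (range' h L) B ≤ junctionRev A B + 1 := by
  have hA : ∀ a ∈ A.getLast?, ¬(h ≤ a ∧ a < h + L) := fun a ha hX =>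
    hAB (mem_append_left B (mem_of_mem_getLast? ha)) (mem_range'_1.2 hX)
  have hB : ∀ b ∈ B.head?, ¬(h ≤ b ∧ b < h + L) := fun b hb hX =>
    hAB (mem_append_right A (mem_of_mem_head? hb)) (mem_range'_1.2 hX)
  revert hA hB
  simp only [junctionRev, getLast?_range', head?_range', hL.ne', if_false]
  cases A.getLast? <;> cases B.head? <;>
    simp only [Option.mem_def, Option.some.injEq, forall_eq', reduceCtorEq, IsEmpty.forall_iff,
      implies_true] <;> intros <;> (try split_ifs) <;> omega

theorem isRun_cons_cons {a b : ℕ} {t : List ℕ} :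
    IsRun (a :: b :: t) ↔ b = a + 1 ∧ IsRun (b :: t) :=
  isChain_cons_cons

theorem IsRun.eq_range' {a : ℕ} {t : List ℕ} (h : IsRun (a :: t)) :
    a :: t = range' a (t.length + 1) := by
  induction t generalizing a with
  | nil => rfl
  | cons b t ih =>
    obtain ⟨rfl, h⟩ := isRun_cons_cons.1 h
    rw [length_cons, range'_succ, ← ih h]

theorem exists_maximal_run_prefix (a : ℕ) (t : List ℕ) :
    ∃ X B, t = X ++ B ∧ IsRun (a :: X) ∧ noLink (a :: X).getLast? B.head? := by
  induction t generalizing a with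
  | nil => exact ⟨[], [], rfl, isChain_singleton a, by simp [noLink]⟩
  | cons b t ih =>
    obtain ⟨X, B, rfl, hrun, hlink⟩ := ih b
    by_cases hb : b = a + 1
    · exact ⟨b :: X, B, rfl, isRun_cons_cons.2 ⟨hb, hrun⟩, by rwa [getLast?_cons_cons]⟩
    · exact ⟨[], b :: X ++ B, rfl, isChain_singleton a, by simpa [noLink] using hb⟩

theorem BlockMove.perm {π π' : List ℕ} (h : BlockMove π π') : π' ~ π := by
  obtain ⟨A, X, B, A', B', rfl, -, -, -, -, hAB, -, rfl⟩ := h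
  refine perm_iff_count.2 fun y => ?_
  have := congrArg (count y) hAB
  simp only [count_append] at this ⊢
  omega

theorem BlockMove.revCount_le {π π' : List ℕ} (h : BlockMove π π') (hπ : π.Nodup) :
    revCount π ≤ revCount π' + 1 := by
  obtain ⟨A, X, B, A', B', rfl, hX, hrun, -, -, hAB, -, rfl⟩ := h
  obtain ⟨a, t, rfl⟩ := exists_cons_of_ne_nil hX
  rw [hrun.eq_range'] at hπ ⊢
  have hL : 0 < t.length + 1 := t.length.succ_pos
  have hdisj : (A ++ B).Disjoint (range' a (t.length + 1)) :=
    disjoint_of_nodup_append (hπ.perm (by simpa using perm_append_comm.append_left A))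
  calc revCount (A ++ range' a (t.length + 1) ++ B)
      ≤ revCount (A ++ B) + 1 := by
        rw [revCount_append_range'_append A B hL, revCount_append_s8]
        linarith [junctionRev_range'_add_le hL hdisj]
    _ = revCount (A' ++ B') + 1 := by rw [hAB]
    _ ≤ revCount (A' ++ range' a (t.length + 1) ++ B') + 1 := by
        rw [revCount_append_range'_append A' B' hL, revCount_append_s8]
        linarith [junctionRev_le_add_range' A' B' (h := a) hL]

theorem revCount_le_of_stepsTo {m : ℕ} {π σ : List ℕ} (h : StepsTo BlockMove m π σ)
    (hπ : π.Nodup) : revCount π ≤ m + revCount σ := by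
  induction m generalizing π with
  | zero =>
    obtain rfl : π = σ := h
    omega
  | succ m ih =>
    obtain ⟨c, hmove, hc⟩ := h
    have := ih hc (hmove.perm.nodup_iff.2 hπ)
    have := hmove.revCount_le hπ
    omega

theorem exists_stepsTo_of_reflTransGen {R : List ℕ → List ℕ → Prop} {a b : List ℕ}
    (h : ReflTransGen R a b) : ∃ m, StepsTo R m a b := by
  induction h using ReflTransGen.head_induction_on with
  | refl => exact ⟨0, rfl⟩
  | head hac _ ih =>
    obtain ⟨m, hm⟩ := ih
    exact ⟨m + 1, _, hac, hm⟩

theorem mem_drop_iff_of_take_eq_range' {n k a : ℕ} {π : List ℕ} (hperm : π ~ idPerm n)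
    (htake : π.take k = range' 1 k) : a ∈ π.drop k ↔ k < a ∧ a ≤ n := by
  have hnd : (range' 1 k ++ π.drop k).Nodup := by
    rw [← htake, take_append_drop]
    exact hperm.nodup_iff.2 nodup_range'
  have hmem : a ∈ range' 1 k ∨ a ∈ π.drop k ↔ a ∈ range' 1 n := by
    rw [← mem_append, ← htake, take_append_drop]
    exact hperm.mem_iff
  simp only [mem_range'_1] at hmem
  constructor
  · intro ha
    have hfresh : a ∉ range' 1 k := fun h => disjoint_of_nodup_append hnd h ha
    rw [mem_range'_1] at hfresh
    have := hmem.1 (.inr ha)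
    omega
  · intro ha
    exact (hmem.2 (by omega)).resolve_left (by omega)

theorem exists_reflGen_blockMove_extend_prefix {n k : ℕ} {π : List ℕ} (hperm : π ~ idPerm n)
    (htake : π.take k = range' 1 k) (hk : k < n) :
    ∃ π' k', k < k' ∧ ReflGen BlockMove π π' ∧ π'.take k' = range' 1 k' := by
  have hπ : π = range' 1 k ++ π.drop k := by rw [← htake, take_append_drop]
  obtain ⟨A, t, hdrop⟩ := append_of_mem ((mem_drop_iff_of_take_eq_range' hperm htake).2
    ⟨k.lt_succ_self, hk⟩)
  obtain ⟨X, B, rfl, hrun, hlink⟩ := exists_maximal_run_prefix (k + 1) t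
  have hsorted : range' 1 k ++ ((k + 1) :: X) = range' 1 (k + (X.length + 1)) := by
    rw [hrun.eq_range', Nat.add_comm k 1, range'_append_1]
  have htake' : ∀ C, (range' 1 k ++ ((k + 1) :: X) ++ C).take (k + (X.length + 1)) =
      range' 1 (k + (X.length + 1)) := fun C => by
    rw [hsorted, take_left' length_range']
  rcases eq_or_ne A [] with rfl | hA
  · refine ⟨π, k + (X.length + 1), by omega, .refl, ?_⟩
    rw [hπ, hdrop, nil_append, ← cons_append, ← append_assoc, htake']
  have hlinkA : noLink (range' 1 k ++ A).getLast? ((k + 1) :: X).head? := by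
    rw [getLast?_append_of_ne_nil _ hA]
    rintro a ha _ ⟨⟩ hka
    have := (mem_drop_iff_of_take_eq_range' hperm htake).1
      (hdrop ▸ mem_append_left _ (mem_of_mem_getLast? ha))
    omega
  have hmove : BlockMove π (range' 1 k ++ ((k + 1) :: X) ++ (A ++ B)) :=
    ⟨range' 1 k ++ A, (k + 1) :: X, B, range' 1 k, A ++ B, by rw [hπ, hdrop]; simp,
      cons_ne_nil _ _, hrun, hlinkA, hlink, by simp, by simpa using hA, rfl⟩
  exact ⟨_, k + (X.length + 1), by omega, .single hmove, htake' _⟩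

theorem reflTransGen_blockMove_idPerm_of_take {n k : ℕ} {π : List ℕ} (hperm : π ~ idPerm n)
    (htake : π.take k = range' 1 k) : ReflTransGen BlockMove π (idPerm n) := by
  by_cases hk : k < n
  · obtain ⟨π', k', hkk', hmove, htake'⟩ := exists_reflGen_blockMove_extend_prefix hperm htake hk
    have hperm' : π' ~ idPerm n := by
      cases hmove with
      | refl => exact hperm
      | single h => exact h.perm.trans hperm
    exact hmove.to_reflTransGen.trans (reflTransGen_blockMove_idPerm_of_take hperm' htake')
  · have hlen : π.length = n := by simpa [idPerm] using hperm.length_eq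
    rw [take_of_length_le (by omega)] at htake
    obtain rfl : n = k := by simpa [hlen] using congrArg length htake
    rw [htake]
    rfl
termination_by n - k

/-- `bs(π) ≥ rev(π)`. -/
theorem BS_ge_rev (n : ℕ) (π : List ℕ) (hperm : π.Perm (idPerm n)) :
    BS n π ≥ revCount π := by
  obtain ⟨m, hm⟩ := exists_stepsTo_of_reflTransGen
    (reflTransGen_blockMove_idPerm_of_take (k := 0) hperm rfl)
  have hBS := Nat.sInf_mem (s := {m | StepsTo BlockMove m π (idPerm n)}) ⟨m, hm⟩
  have := revCount_le_of_stepsTo hBS (hperm.nodup_iff.2 nodup_range')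
  rwa [idPerm, revCount_range', add_zero] at this
end
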